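/- Fidelity monotonicity under partial trace: for density matrices ρ, σ on H_A ⊗ H_B, F(ρ, σ) ≤ F(tr_B ρ, tr_B σ), where F(ρ,σ) = tr√(√ρ σ √ρ). -/

import Mathlib

open scoped ComplexOrder

/-- Partial trace over the second tensor factor. -/
noncomputable def ptraceB {a b : ℕ} (M : Matrix (Fin a × Fin b) (Fin a × Fin b) ℂ) :
    Matrix (Fin a) (Fin a) ℂ :=
  fun i k => ∑ j, M (i, j) (k, j)

/-- The positive semidefinite square root (removed from Mathlib; old definition restored). -/
noncomputable def Matrix.PosSemidef.sqrt {n : Type*} [Fintype n] [DecidableEq n] {𝕜 : Type*}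
    [RCLike 𝕜] {A : Matrix n n 𝕜} (hA : A.PosSemidef) : Matrix n n 𝕜 :=
  (hA.1.eigenvectorUnitary : Matrix n n 𝕜) *
    Matrix.diagonal (((↑) : ℝ → 𝕜) ∘ Real.sqrt ∘ hA.1.eigenvalues) *
    (star hA.1.eigenvectorUnitary : Matrix n n 𝕜)

/-!
Fidelity has a block-matrix characterization: `F(P, Q) = tr √(√P Q √P)` is the largest value of
`re tr X` over all `X` with `[[P, X], [Xᴴ, Q]] ⪰ 0`. Such a block is a Gram matrix, so
`X = T₁ᴴ T₂` with `T₁ᴴ T₁ = P` and `T₂ᴴ T₂ = Q`; polar decompositions `T₁ = W₁ √P`, `T₂ = W₂ √Q`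
and `√Q √P = V |√Q √P|` give `tr X = tr (W₁ᴴ W₂ V |√Q √P|)`, which a contraction cannot push above
`tr |√Q √P| = F(P, Q)`. The bound is attained at `X = √P Vᴴ √Q`.

The partial trace sends the block matrix of `(ρ, X, σ)` to that of `(tr_B ρ, tr_B X, tr_B σ)`, a
sum of principal submatrices, hence again positive, and it preserves `tr X`. So the optimal `X`
for `(ρ, σ)` is a candidate for `(tr_B ρ, tr_B σ)`.
-/

open scoped MatrixOrder
open Matrix

namespace Matrix

section Sqrt
variable {n 𝕜 : Type*} [Fintype n] [DecidableEq n] [RCLike 𝕜]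

lemma PosSemidef.sqrt_eq_cfcSqrt {A : Matrix n n 𝕜} (hA : A.PosSemidef) :
    hA.sqrt = CFC.sqrt A := by
  rw [CFC.sqrt_eq_real_sqrt A hA.nonneg, cfcₙ_eq_cfc, hA.1.cfc_eq, IsHermitian.cfc,
    Unitary.conjStarAlgAut_apply]
  rfl

lemma conjTranspose_cfcSqrt (A : Matrix n n 𝕜) : (CFC.sqrt A)ᴴ = CFC.sqrt A :=
  (IsSelfAdjoint.of_nonneg (CFC.sqrt_nonneg A)).star_eq

/-- `R = x⁻¹(S)`; the convention `0⁻¹ = 0` in `ℝ` makes it invert `S` exactly off its kernel. -/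
lemma exists_pseudoinverse_of_isSelfAdjoint {S : Matrix n n 𝕜} (hS : IsSelfAdjoint S) :
    ∃ R : Matrix n n 𝕜, Rᴴ = R ∧ Commute R S ∧ S * R * S = S ∧ R * S * R = R := by
  have hcont (f : ℝ → ℝ) : ContinuousOn f (spectrum ℝ S) :=
    S.finite_real_spectrum.continuousOn f
  have hmul (f g : ℝ → ℝ) : cfc (fun x => f x * g x) S = cfc f S * cfc g S :=
    cfc_mul f g S (hcont f) (hcont g)
  have hinv (x : ℝ) : x⁻¹ * x * x⁻¹ = x⁻¹ := by simpa using mul_inv_mul_cancel x⁻¹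
  refine ⟨cfc (·⁻¹ : ℝ → ℝ) S, IsSelfAdjoint.star_eq (cfc_predicate _ S), ?_, ?_, ?_⟩
  · simpa only [cfc_id' ℝ S] using cfc_commute_cfc (·⁻¹ : ℝ → ℝ) (fun x => x) S
  · conv_rhs => rw [← cfc_id' ℝ S, ← funext (mul_inv_mul_cancel (G₀ := ℝ))]
    rw [hmul, hmul, cfc_id' ℝ S]
  · conv_rhs => rw [← funext hinv]
    rw [hmul, hmul, cfc_id' ℝ S]

end Sqrt

section PartialIsometry
variable {m n 𝕜 : Type*} [Fintype m] [Fintype n] [RCLike 𝕜]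

def IsPartialIsometry (W : Matrix m n 𝕜) : Prop := W * Wᴴ * W = W

lemma IsPartialIsometry.conjTranspose {W : Matrix m n 𝕜} (hW : W.IsPartialIsometry) :
    Wᴴ.IsPartialIsometry := by
  simpa only [IsPartialIsometry, conjTranspose_mul, conjTranspose_conjTranspose,
    Matrix.mul_assoc] using congrArg Matrix.conjTranspose hW

lemma IsPartialIsometry.isStarProjection_conjTranspose_mul_self {W : Matrix m n 𝕜}
    (hW : W.IsPartialIsometry) : IsStarProjection (Wᴴ * W) where
  isIdempotentElem := by
    have h := hW.conjTranspose
    rw [IsPartialIsometry, conjTranspose_conjTranspose] at h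
    rw [IsIdempotentElem, ← Matrix.mul_assoc, h]
  isSelfAdjoint := by
    rw [IsSelfAdjoint, star_eq_conjTranspose, conjTranspose_mul, conjTranspose_conjTranspose]

lemma IsPartialIsometry.isStarProjection_mul_conjTranspose_self {W : Matrix m n 𝕜}
    (hW : W.IsPartialIsometry) : IsStarProjection (W * Wᴴ) := by
  simpa only [conjTranspose_conjTranspose] using
    hW.conjTranspose.isStarProjection_conjTranspose_mul_self

theorem exists_polar_decomposition [DecidableEq n] (A : Matrix m n 𝕜) {S : Matrix n n 𝕜}
    (hS : IsSelfAdjoint S) (hSA : S * S = Aᴴ * A) :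
    ∃ W : Matrix m n 𝕜, W.IsPartialIsometry ∧ A = W * S ∧ Wᴴ * W * S = S := by
  obtain ⟨R, hR, hRS, hSRS, hRSR⟩ := exists_pseudoinverse_of_isSelfAdjoint hS
  -- `A` vanishes on the kernel of `S`, because `(A v)ᴴ (A v) = (S v)ᴴ (S v)`.
  have hA : A * R * S = A := by
    have hker : S * (1 - R * S) = 0 := by rw [mul_sub, mul_one, ← mul_assoc, hSRS, sub_self]
    have h0 : (A * (1 - R * S))ᴴ * (A * (1 - R * S)) = 0 := by
      rw [conjTranspose_mul, Matrix.mul_assoc, ← Matrix.mul_assoc Aᴴ, ← hSA, Matrix.mul_assoc,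
        hker, Matrix.mul_zero, Matrix.mul_zero]
    rw [conjTranspose_mul_self_eq_zero, Matrix.mul_sub, Matrix.mul_one, sub_eq_zero] at h0
    rw [Matrix.mul_assoc, ← h0]
  refine ⟨A * R, ?_, hA.symm, ?_⟩
  · calc A * R * (A * R)ᴴ * (A * R) = A * (R * R * (Aᴴ * A) * R) := by
          rw [conjTranspose_mul, hR]; simp only [Matrix.mul_assoc]
      _ = A * R := by
          rw [← hSA, ← mul_assoc (R * R), mul_assoc R R S, hRS.eq, ← mul_assoc R S R, hRSR, hRSR]
  · calc (A * R)ᴴ * (A * R) * S = R * (Aᴴ * A) * R * S := by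
          rw [conjTranspose_mul, hR]; simp only [Matrix.mul_assoc]
      _ = S := by
          rw [← hSA, ← mul_assoc R S S, mul_assoc (R * S) S R, mul_assoc (R * S) (S * R) S, hSRS,
            hRS.eq, hSRS]

lemma PosSemidef.exists_gram_of_fromBlocks [DecidableEq m] [DecidableEq n] {P : Matrix m m 𝕜}
    {X : Matrix m n 𝕜} {Y : Matrix n m 𝕜} {Q : Matrix n n 𝕜}
    (h : (fromBlocks P X Y Q).PosSemidef) :
    ∃ (T₁ : Matrix (m ⊕ n) m 𝕜) (T₂ : Matrix (m ⊕ n) n 𝕜),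
      T₁ᴴ * T₁ = P ∧ T₁ᴴ * T₂ = X ∧ T₂ᴴ * T₂ = Q := by
  set T := CFC.sqrt (fromBlocks P X Y Q)
  have hT : Tᴴ * T = fromBlocks P X Y Q := by
    rw [conjTranspose_cfcSqrt, CFC.sqrt_mul_sqrt_self _ h.nonneg]
  rw [← fromCols_toCols T, conjTranspose_fromCols_eq_fromRows_conjTranspose,
    fromRows_mul_fromCols, fromBlocks_inj] at hT
  exact ⟨T.toCols₁, T.toCols₂, hT.1, hT.2.1, hT.2.2.2⟩

end PartialIsometry

section Contraction
variable {l m n 𝕜 : Type*} [Fintype l] [Fintype m] [Fintype n] [RCLike 𝕜] [DecidableEq n]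

def IsContraction (K : Matrix m n 𝕜) : Prop := Kᴴ * K ≤ 1

lemma IsContraction.mul [DecidableEq m] {C : Matrix l m 𝕜} {K : Matrix m n 𝕜} (hC : C.IsContraction)
    (hK : K.IsContraction) : (C * K).IsContraction := by
  have hle : Kᴴ * (Cᴴ * C) * K ≤ Kᴴ * K := by
    rw [le_iff]
    convert hC.conjTranspose_mul_mul_same K using 1
    rw [Matrix.mul_sub, Matrix.sub_mul, Matrix.mul_one]
  unfold IsContraction
  rw [conjTranspose_mul, Matrix.mul_assoc, ← Matrix.mul_assoc Cᴴ, ← Matrix.mul_assoc]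
  exact hle.trans hK

lemma IsPartialIsometry.isContraction {W : Matrix m n 𝕜} (hW : W.IsPartialIsometry) :
    W.IsContraction :=
  hW.isStarProjection_conjTranspose_mul_self.le_one

/-- Expand `0 ≤ tr ((K T - T)ᴴ (K T - T))` with `T = √P` and bound `tr (T Kᴴ K T) ≤ tr P`. -/
lemma IsContraction.re_trace_mul_le {K P : Matrix n n 𝕜} (hK : K.IsContraction)
    (hP : P.PosSemidef) : RCLike.re (K * P).trace ≤ RCLike.re P.trace := by
  set T := CFC.sqrt P
  have hT : Tᴴ = T := conjTranspose_cfcSqrt P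
  have hTT : T * T = P := CFC.sqrt_mul_sqrt_self P hP.nonneg
  have hre {M : Matrix n n 𝕜} (hM : M.PosSemidef) : 0 ≤ RCLike.re M.trace :=
    (RCLike.nonneg_iff.mp hM.trace_nonneg).1
  have hsq := hre (posSemidef_conjTranspose_mul_self (K * T - T))
  have hKK := hre (hK.conjTranspose_mul_mul_same T)
  rw [hT] at hKK
  have hKP : (T * K * T).trace = (K * P).trace := by
    rw [Matrix.mul_assoc, trace_mul_comm, Matrix.mul_assoc, hTT]
  have hKP' : RCLike.re (T * Kᴴ * T).trace = RCLike.re (T * K * T).trace := by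
    have : (T * K * T)ᴴ = T * Kᴴ * T := by
      rw [conjTranspose_mul, conjTranspose_mul, hT, Matrix.mul_assoc]
    rw [← this, trace_conjTranspose, RCLike.star_def, RCLike.conj_re]
  have hsq_eq : (K * T - T)ᴴ * (K * T - T) = T * Kᴴ * K * T - T * Kᴴ * T - T * K * T + T * T := by
    rw [conjTranspose_sub, conjTranspose_mul, hT]; noncomm_ring
  have hKK_eq : T * (1 - Kᴴ * K) * T = T * T - T * Kᴴ * K * T := by noncomm_ring
  rw [hsq_eq, trace_add, trace_sub, trace_sub, map_add, map_sub, map_sub] at hsq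
  rw [hKK_eq, trace_sub, map_sub] at hKK
  rw [← hKP, ← hTT]
  linarith

end Contraction

section Fidelity
variable {n 𝕜 : Type*} [Fintype n] [DecidableEq n] [RCLike 𝕜]

noncomputable def fidelity (P Q : Matrix n n 𝕜) : ℝ :=
  RCLike.re (CFC.sqrt (CFC.sqrt P * Q * CFC.sqrt P)).trace

lemma exists_polar_sqrt_mul_sqrt (P : Matrix n n 𝕜) {Q : Matrix n n 𝕜} (hQ : 0 ≤ Q) :
    ∃ V : Matrix n n 𝕜, V.IsPartialIsometry ∧
      CFC.sqrt Q * CFC.sqrt P = V * CFC.sqrt (CFC.sqrt P * Q * CFC.sqrt P) ∧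
      Vᴴ * V * CFC.sqrt (CFC.sqrt P * Q * CFC.sqrt P) = CFC.sqrt (CFC.sqrt P * Q * CFC.sqrt P) := by
  have hconj : 0 ≤ CFC.sqrt P * Q * CFC.sqrt P := by
    simpa only [star_eq_conjTranspose, conjTranspose_cfcSqrt] using
      star_left_conjugate_nonneg hQ (CFC.sqrt P)
  refine exists_polar_decomposition _ (conjTranspose_cfcSqrt _) ?_
  rw [CFC.sqrt_mul_sqrt_self _ hconj, conjTranspose_mul, conjTranspose_cfcSqrt,
    conjTranspose_cfcSqrt]
  conv_lhs => rw [← CFC.sqrt_mul_sqrt_self Q hQ]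
  simp only [Matrix.mul_assoc]

theorem exists_fromBlocks_posSemidef_re_trace_eq_fidelity {P Q : Matrix n n 𝕜}
    (hP : P.PosSemidef) (hQ : Q.PosSemidef) :
    ∃ X : Matrix n n 𝕜, (fromBlocks P X Xᴴ Q).PosSemidef ∧ RCLike.re X.trace = fidelity P Q := by
  obtain ⟨W, hW, hA, hWS⟩ := exists_polar_sqrt_mul_sqrt P hQ.nonneg
  set E := 1 - W * Wᴴ
  have hE : IsStarProjection E := hW.isStarProjection_mul_conjTranspose_self.one_sub
  set Z := fromBlocks (CFC.sqrt P) (Wᴴ * CFC.sqrt Q) 0 (E * CFC.sqrt Q)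
  refine ⟨CFC.sqrt P * Wᴴ * CFC.sqrt Q, ?_, ?_⟩
  · suffices h : fromBlocks P (CFC.sqrt P * Wᴴ * CFC.sqrt Q) (CFC.sqrt P * Wᴴ * CFC.sqrt Q)ᴴ Q
        = Zᴴ * Z by
      rw [h]; exact posSemidef_conjTranspose_mul_self Z
    have hEH : Eᴴ = E := hE.isSelfAdjoint
    simp only [Z, fromBlocks_conjTranspose, fromBlocks_multiply, conjTranspose_mul,
      conjTranspose_cfcSqrt, conjTranspose_conjTranspose, conjTranspose_zero, hEH,
      Matrix.mul_zero, Matrix.zero_mul, add_zero, CFC.sqrt_mul_sqrt_self P hP.nonneg,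
      Matrix.mul_assoc]
    refine fromBlocks_inj.mpr ⟨rfl, rfl, rfl, ?_⟩
    rw [← Matrix.mul_assoc E, hE.isIdempotentElem.eq, ← Matrix.mul_assoc W, ← Matrix.mul_add,
      ← Matrix.add_mul, add_sub_cancel, Matrix.one_mul, CFC.sqrt_mul_sqrt_self Q hQ.nonneg]
  · rw [Matrix.mul_assoc, trace_mul_comm, Matrix.mul_assoc, hA, ← Matrix.mul_assoc, hWS,
      fidelity]

theorem re_trace_le_fidelity {P Q X : Matrix n n 𝕜} (h : (fromBlocks P X Xᴴ Q).PosSemidef) :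
    RCLike.re X.trace ≤ fidelity P Q := by
  obtain ⟨T₁, T₂, hP, hX, hQ⟩ := h.exists_gram_of_fromBlocks
  have hQ0 : 0 ≤ Q := (hQ ▸ posSemidef_conjTranspose_mul_self T₂).nonneg
  obtain ⟨W₁, hW₁, hT₁, -⟩ := exists_polar_decomposition T₁ (conjTranspose_cfcSqrt P)
    (by rw [CFC.sqrt_mul_sqrt_self P (hP ▸ posSemidef_conjTranspose_mul_self T₁).nonneg, hP])
  obtain ⟨W₂, hW₂, hT₂, -⟩ := exists_polar_decomposition T₂ (conjTranspose_cfcSqrt Q)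
    (by rw [CFC.sqrt_mul_sqrt_self Q hQ0, hQ])
  obtain ⟨V, hV, hB, -⟩ := exists_polar_sqrt_mul_sqrt P hQ0
  have hK : (W₁ᴴ * W₂ * V).IsContraction :=
    (hW₁.conjTranspose.isContraction.mul hW₂.isContraction).mul hV.isContraction
  calc RCLike.re X.trace
      = RCLike.re (W₁ᴴ * W₂ * V * CFC.sqrt (CFC.sqrt P * Q * CFC.sqrt P)).trace := by
        rw [← hX, hT₁, hT₂, conjTranspose_mul, conjTranspose_cfcSqrt, Matrix.mul_assoc,
          trace_mul_comm, Matrix.mul_assoc, Matrix.mul_assoc, Matrix.mul_assoc, hB]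
        simp only [Matrix.mul_assoc]
    _ ≤ fidelity P Q := hK.re_trace_mul_le (nonneg_iff_posSemidef.mp (CFC.sqrt_nonneg _))

end Fidelity

end Matrix

section PartialTrace
variable {a b : ℕ}

lemma ptraceB_conjTranspose (M : Matrix (Fin a × Fin b) (Fin a × Fin b) ℂ) :
    ptraceB Mᴴ = (ptraceB M)ᴴ := by
  ext i k
  simp [ptraceB, conjTranspose_apply, star_sum]

lemma trace_ptraceB (M : Matrix (Fin a × Fin b) (Fin a × Fin b) ℂ) :
    (ptraceB M).trace = M.trace := by
  simp [Matrix.trace, ptraceB, Fintype.sum_prod_type]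

lemma Matrix.PosSemidef.fromBlocks_ptraceB
    {P X Y Q : Matrix (Fin a × Fin b) (Fin a × Fin b) ℂ} (h : (fromBlocks P X Y Q).PosSemidef) :
    (fromBlocks (ptraceB P) (ptraceB X) (ptraceB Y) (ptraceB Q)).PosSemidef := by
  have hsum : fromBlocks (ptraceB P) (ptraceB X) (ptraceB Y) (ptraceB Q) =
      ∑ j, (fromBlocks P X Y Q).submatrix (Sum.map (·, j) (·, j)) (Sum.map (·, j) (·, j)) := by
    ext (i | i) (k | k) <;> simp [ptraceB, sum_apply]
  rw [hsum]
  exact posSemidef_sum _ fun j _ => h.submatrix _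

end PartialTrace

theorem fidelity_mono_ptrace_general {a b : ℕ}
    (ρ σ : Matrix (Fin a × Fin b) (Fin a × Fin b) ℂ)
    (hρ : ρ.PosSemidef) (hσ : σ.PosSemidef)
    (hρA : (ptraceB ρ).PosSemidef)
    (h1 : (hρ.sqrt * σ * hρ.sqrt).PosSemidef)
    (h2 : (hρA.sqrt * ptraceB σ * hρA.sqrt).PosSemidef) :
    (h1.sqrt.trace).re ≤ (h2.sqrt.trace).re := by
  obtain ⟨X, hX, hXtr⟩ := exists_fromBlocks_posSemidef_re_trace_eq_fidelity hρ hσ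
  have hXA := hX.fromBlocks_ptraceB
  rw [ptraceB_conjTranspose] at hXA
  calc (h1.sqrt.trace).re = fidelity ρ σ := by
        rw [h1.sqrt_eq_cfcSqrt, hρ.sqrt_eq_cfcSqrt]; rfl
    _ = (ptraceB X).trace.re := by rw [← hXtr, trace_ptraceB]; rfl
    _ ≤ fidelity (ptraceB ρ) (ptraceB σ) := re_trace_le_fidelity hXA
    _ = (h2.sqrt.trace).re := by rw [h2.sqrt_eq_cfcSqrt, hρA.sqrt_eq_cfcSqrt]; rfl

/-- Fidelity monotonicity under partial trace: for density
matrices ρ, σ on H_A ⊗ H_B, F(ρ,σ) ≤ F(tr_B ρ, tr_B σ), where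
F(ρ,σ) = tr √(√ρ σ √ρ). -/
theorem fidelity_mono_ptrace {a b : ℕ}
    (ρ σ : Matrix (Fin a × Fin b) (Fin a × Fin b) ℂ)
    (hρ : ρ.PosSemidef) (hσ : σ.PosSemidef)
    (hρtr : ρ.trace = 1) (hσtr : σ.trace = 1)
    (hρA : (ptraceB ρ).PosSemidef)
    (h1 : (hρ.sqrt * σ * hρ.sqrt).PosSemidef)
    (h2 : (hρA.sqrt * ptraceB σ * hρA.sqrt).PosSemidef) :
    (h1.sqrt.trace).re ≤ (h2.sqrt.trace).re :=
  fidelity_mono_ptrace_general ρ σ hρ hσ hρA h1 h2
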